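/- Let β > 0, c > 0, λ = sqrt(β² + cβ), and assume β ≠ λ. Let φ be smooth with −Δφ = βφ. Define u(x,t) = (c/(β − λ))·e^{λt}·φ(x) and m(x,t) = e^{λt}·φ(x). Then −∂_t u − Δu = c·m and ∂_t m − Δm − Δu = 0 on Ω × (0,T). -/

import Mathlib

open MeasureTheory Real Set

/-- Laplacian as the sum of second directional derivatives along coordinate axes. -/
noncomputable def lap {n : ℕ} (φ : EuclideanSpace ℝ (Fin n) → ℝ)
    (x : EuclideanSpace ℝ (Fin n)) : ℝ :=
  ∑ i : Fin n, iteratedDeriv 2 (fun s : ℝ => φ (x + s • EuclideanSpace.single i (1 : ℝ))) 0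

lemma lap_const_mul {n : ℕ} (a : ℝ) (φ : EuclideanSpace ℝ (Fin n) → ℝ)
    (x : EuclideanSpace ℝ (Fin n)) :
    lap (fun y => a * φ y) x = a * lap φ x := by
  unfold lap
  rw [Finset.mul_sum]
  refine Finset.sum_congr rfl fun i _ => ?_
  simp [iteratedDeriv_succ, iteratedDeriv_zero, deriv_const_mul_field']

theorem stmt2 {n : ℕ} (Ω : Set (EuclideanSpace ℝ (Fin n))) (T β c lam : ℝ)
    (hβ : 0 < β) (hc : 0 < c) (hT : 0 < T)
    (hlam : lam = Real.sqrt (β ^ 2 + c * β)) (hne : β ≠ lam)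
    (φ : EuclideanSpace ℝ (Fin n) → ℝ) (hφ : ContDiff ℝ (⊤ : ℕ∞) φ)
    (heig : ∀ x ∈ Ω, -lap φ x = β * φ x)
    (u m : EuclideanSpace ℝ (Fin n) → ℝ → ℝ)
    (hu : ∀ x t, u x t = (c / (β - lam)) * Real.exp (lam * t) * φ x)
    (hm : ∀ x t, m x t = Real.exp (lam * t) * φ x) :
    ∀ x ∈ Ω, ∀ t ∈ Set.Ioo (0 : ℝ) T,
      (-(deriv (fun τ => u x τ) t) - lap (fun y => u y t) x = c * m x t) ∧
      (deriv (fun τ => m x τ) t - lap (fun y => m y t) x - lap (fun y => u y t) x = 0) := by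
  intro x hx t _
  have hsq : lam ^ 2 = β ^ 2 + c * β := by
    rw [hlam, sq_sqrt]; positivity
  have hlap : lap φ x = -(β * φ x) := by
    have := heig x hx; linarith
  have hsub : β - lam ≠ 0 := sub_ne_zero.mpr hne
  set k : ℝ := c / (β - lam) with hk
  -- time derivative of exp(lam * τ)
  have hexp : HasDerivAt (fun τ : ℝ => Real.exp (lam * τ)) (Real.exp (lam * t) * lam) t := by
    have h := (Real.hasDerivAt_exp (lam * t)).comp t ((hasDerivAt_id t).const_mul lam)
    simp only [mul_one] at h
    exact h
  have hdu : deriv (fun τ => u x τ) t = k * (Real.exp (lam * t) * lam) * φ x := by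
    have : (fun τ => u x τ) = fun τ => k * Real.exp (lam * τ) * φ x := by
      funext τ; rw [hu]
    rw [this]
    exact ((hexp.const_mul k).mul_const (φ x)).deriv
  have hdm : deriv (fun τ => m x τ) t = Real.exp (lam * t) * lam * φ x := by
    have : (fun τ => m x τ) = fun τ => Real.exp (lam * τ) * φ x := by
      funext τ; rw [hm]
    rw [this]
    exact (hexp.mul_const (φ x)).deriv
  have hlapu : lap (fun y => u y t) x = (k * Real.exp (lam * t)) * lap φ x := by
    have : (fun y => u y t) = fun y => (k * Real.exp (lam * t)) * φ y := by
      funext y; rw [hu]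
    rw [this]; exact lap_const_mul _ φ x
  have hlapm : lap (fun y => m y t) x = Real.exp (lam * t) * lap φ x := by
    have : (fun y => m y t) = fun y => Real.exp (lam * t) * φ y := by
      funext y; rw [hm]
    rw [this]
    simpa using lap_const_mul (Real.exp (lam * t)) φ x
  constructor
  · rw [hdu, hlapu, hlap, hm, hk]
    field_simp
    ring
  · have hkb : k * β = -(lam + β) := by
      rw [hk]
      field_simp
      linear_combination -hsq
    rw [hdm, hlapm, hlapu, hlap]
    linear_combination (Real.exp (lam * t) * φ x) * hkb
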